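/- arXiv:0908.3157 — 2 statements merged into one kernel-verified Lean document; each statement's English description precedes it below -/
import Mathlib

section
/- Assume dA ≥ 2 and dB ≥ 2. Then the set C₀ = {ρ : ρ a density matrix with [ρ, (Tr_B ρ) ⊗ I_{dB}] = 0} is nowhere dense in the set of all d×d density matrices (equipped with the subspace topology from the space of d×d complex matrices): the closure of C₀ in the set of density matrices has empty interior there. -/
open Matrix MeasureTheory
open scoped Kronecker ComplexOrder

/-- A density matrix: positive semidefinite with unit trace. -/
def IsDensityMatrix {n : Type*} [Fintype n] (ρ : Matrix n n ℂ) : Prop :=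
  ρ.PosSemidef ∧ ρ.trace = 1

/-- Partial trace over the second subsystem. -/
noncomputable def ptraceB {dA dB : ℕ} (ρ : Matrix (Fin dA × Fin dB) (Fin dA × Fin dB) ℂ) :
    Matrix (Fin dA) (Fin dA) ℂ :=
  Matrix.of fun a a' => ∑ b, ρ (a, b) (a', b)

/-- Zero-discord (classical-quantum) states: block diagonal in some
orthonormal local basis of the first subsystem. -/
def IsZeroDiscord {dA dB : ℕ} (ρ : Matrix (Fin dA × Fin dB) (Fin dA × Fin dB) ℂ) : Prop :=
  ∃ (v : Fin dA → (Fin dA → ℂ)) (p : Fin dA → ℝ)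
    (σ : Fin dA → Matrix (Fin dB) (Fin dB) ℂ),
      (∀ j k, star (v j) ⬝ᵥ v k = if j = k then 1 else 0) ∧
      (∀ j, 0 ≤ p j) ∧ (∑ j, p j = 1) ∧
      (∀ j, IsDensityMatrix (σ j)) ∧
      ρ = ∑ j, (p j : ℂ) • (Matrix.vecMulVec (v j) (star (v j)) ⊗ₖ σ j)

/-!
`C₀` is the zero set, inside the convex set of states, of the continuous quadratic map
`ρ ↦ [ρ, Tr_B ρ ⊗ I]`, so it is closed and it suffices that it has empty interior. If it contained
a neighbourhood of a state `ρ`, then for any state `σ` the quadratic polynomial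
`s ↦ [γ s, Tr_B (γ s) ⊗ I]`, `γ s = (1 - s) ρ + s σ`, would vanish for all small `s ≥ 0`, hence
identically, and `σ ∈ C₀` would follow. For `dA, dB ≥ 2` an entangled pure state lies outside `C₀`.
-/

section QuadraticZeroSet

open AffineMap

variable {E M : Type*} [AddCommGroup E] [Module ℝ E] [AddCommGroup M] [Module ℝ M]

lemma LinearMap.apply_lineMap_self (f : E →ₗ[ℝ] E →ₗ[ℝ] M) (x y : E) (s : ℝ) :
    f (lineMap x y s) (lineMap x y s) =
      (1 - s) ^ 2 • f x x + (s * (1 - s)) • (f x y + f y x) + s ^ 2 • f y y := by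
  simp only [lineMap_apply_module, map_add, map_smul, LinearMap.add_apply, LinearMap.smul_apply]
  module

/-- With `f x x = 0` the form along the segment is `s • ((1 - s) • a + s • f y y)`: two nonzero
zeros determine both coefficients. -/
lemma LinearMap.apply_self_eq_zero_of_apply_lineMap_self {f : E →ₗ[ℝ] E →ₗ[ℝ] M} {x y : E}
    (hx : f x x = 0) {t : ℝ} (ht : t ≠ 0)
    (h₁ : f (lineMap x y t) (lineMap x y t) = 0)
    (h₂ : f (lineMap x y (t / 2)) (lineMap x y (t / 2)) = 0) :
    f y y = 0 := by
  rw [f.apply_lineMap_self, hx] at h₁ h₂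
  have : t ^ 2 • f y y = 0 := by
    linear_combination (norm := module) (2 - t) • h₁ - (4 * (1 - t)) • h₂
  exact (smul_eq_zero.mp this).resolve_left (pow_ne_zero 2 ht)

variable [TopologicalSpace E] [IsTopologicalAddGroup E] [ContinuousSMul ℝ E]

theorem LinearMap.interior_setOf_apply_self_eq_zero {C : Set E} (hC : Convex ℝ C)
    (f : E →ₗ[ℝ] E →ₗ[ℝ] M) {y : E} (hy : y ∈ C) (hfy : f y y ≠ 0) :
    interior {x : C | f x x = 0} = ∅ := by
  refine Set.eq_empty_of_forall_notMem fun ⟨x, hxC⟩ hx => hfy ?_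
  obtain ⟨U, hUZ, hU, hxU⟩ := mem_interior.mp hx
  obtain ⟨V, hV, rfl⟩ := isOpen_induced_iff.mp hU
  have hγ : Continuous (lineMap x y : ℝ →ᵃ[ℝ] E) := lineMap_continuous
  obtain ⟨ε, hε, hball⟩ := Metric.isOpen_iff.mp (hV.preimage hγ) 0 (by simpa using hxU)
  have hzero : ∀ s, 0 < s → s < min ε 1 → f (lineMap x y s) (lineMap x y s) = 0 := by
    intro s hs₀ hs₁
    have hsC : lineMap x y s ∈ C :=
      hC.lineMap_mem hxC hy ⟨hs₀.le, by linarith [min_le_right ε 1]⟩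
    refine hUZ (show (⟨_, hsC⟩ : C) ∈ Subtype.val ⁻¹' V from hball ?_)
    rw [Metric.mem_ball, Real.dist_0_eq_abs, abs_of_pos hs₀]
    linarith [min_le_left ε 1]
  have hm : 0 < min ε 1 := lt_min hε one_pos
  exact f.apply_self_eq_zero_of_apply_lineMap_self (hUZ hxU) (t := min ε 1 / 2) (by positivity)
    (hzero _ (by positivity) (by linarith)) (hzero _ (by positivity) (by linarith))

theorem LinearMap.isNowhereDense_setOf_apply_self_eq_zero {C : Set E} (hC : Convex ℝ C)
    (f : E →ₗ[ℝ] E →ₗ[ℝ] M) [TopologicalSpace M] [T1Space M] (hf : Continuous fun x => f x x)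
    {y : E} (hy : y ∈ C) (hfy : f y y ≠ 0) :
    IsNowhereDense {x : C | f x x = 0} := by
  have hclosed : IsClosed {x : C | f x x = 0} :=
    isClosed_singleton.preimage (hf.comp continuous_subtype_val)
  rw [hclosed.isNowhereDense_iff]
  exact f.interior_setOf_apply_self_eq_zero hC hy hfy

end QuadraticZeroSet

lemma convex_setOf_isDensityMatrix {n : Type*} [Fintype n] :
    Convex ℝ {ρ : Matrix n n ℂ | IsDensityMatrix ρ} := by
  intro ρ hρ σ hσ a b ha hb hab
  refine ⟨(hρ.1.smul ha).add (hσ.1.smul hb), ?_⟩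
  rw [trace_add, trace_smul, trace_smul, hρ.2, hσ.2, ← add_smul, hab, one_smul]

section PartialTrace

variable {dA dB : ℕ}
local notation "𝕄" => Matrix (Fin dA × Fin dB) (Fin dA × Fin dB) ℂ

noncomputable def ptraceBKronOne : 𝕄 →ₗ[ℝ] 𝕄 where
  toFun ρ := ptraceB ρ ⊗ₖ 1
  map_add' ρ σ := by ext; simp [ptraceB, Finset.sum_add_distrib, add_mul]
  map_smul' c ρ := by ext; simp [ptraceB, ← Finset.mul_sum, mul_assoc]

noncomputable def commutatorPtraceB : 𝕄 →ₗ[ℝ] 𝕄 →ₗ[ℝ] 𝕄 :=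
  (LinearMap.mul ℝ 𝕄 - (LinearMap.mul ℝ 𝕄).flip).compl₂ ptraceBKronOne

lemma commutatorPtraceB_apply (ρ σ : 𝕄) :
    commutatorPtraceB ρ σ = ρ * (ptraceB σ ⊗ₖ 1) - (ptraceB σ ⊗ₖ 1) * ρ := rfl

lemma continuous_commutatorPtraceB_self : Continuous fun ρ : 𝕄 => commutatorPtraceB ρ ρ := by
  have := (ptraceBKronOne (dA := dA) (dB := dB)).continuous_of_finiteDimensional
  simp only [commutatorPtraceB, LinearMap.compl₂_apply, LinearMap.sub_apply,
    LinearMap.mul_apply', LinearMap.flip_apply]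
  fun_prop

lemma exists_isDensityMatrix_commutatorPtraceB_ne_zero (hdA : 2 ≤ dA) (hdB : 2 ≤ dB) :
    ∃ σ : 𝕄, IsDensityMatrix σ ∧ commutatorPtraceB σ σ ≠ 0 := by
  have := Fin.nontrivial_iff_two_le.mpr hdA
  have := Fin.nontrivial_iff_two_le.mpr hdB
  obtain ⟨i₀, i₁, hi⟩ := exists_pair_ne (Fin dA)
  obtain ⟨b₀, b₁, hb⟩ := exists_pair_ne (Fin dB)
  -- `ψ` is not an eigenvector of `Tr_B |ψ⟩⟨ψ| ⊗ I`, so `|ψ⟩⟨ψ|` does not commute with it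
  set ψ : Fin dA × Fin dB → ℂ :=
    Pi.single (i₀, b₀) 1 + Pi.single (i₁, b₀) 1 + Pi.single (i₁, b₁) 1
  have htrace : (vecMulVec ψ (star ψ)).trace = 3 := by
    norm_num [trace, vecMulVec, ψ, Pi.single_apply, mul_add, Finset.sum_add_distrib, hi, hb,
      hi.symm, hb.symm]
  have hentry :
      commutatorPtraceB (vecMulVec ψ (star ψ)) (vecMulVec ψ (star ψ)) (i₀, b₀) (i₀, b₁) = 1 := by
    simp [commutatorPtraceB_apply, Matrix.mul_apply, ptraceB, vecMulVec, Fintype.sum_prod_type,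
      ψ, Pi.single_apply, ite_and, Finset.sum_add_distrib, mul_add, Matrix.one_apply, hi, hb,
      hb.symm]
  refine ⟨(1 / 3 : ℝ) • vecMulVec ψ (star ψ),
    ⟨(posSemidef_vecMulVec_self_star ψ).smul (by norm_num), ?_⟩, fun h => ?_⟩
  · rw [trace_smul, htrace]; norm_num
  · have hcoeff := congrFun₂ h (i₀, b₀) (i₀, b₁)
    simp only [map_smul, LinearMap.smul_apply, Matrix.smul_apply, hentry] at hcoeff
    norm_num at hcoeff

end PartialTrace

/-- For `dA, dB ≥ 2`, the set `C₀` of density matrices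
commuting with their reduced state is nowhere dense in the set of all density
matrices (with the subspace topology from matrix space). -/
theorem C0_isNowhereDense (dA dB : ℕ) (hdA : 2 ≤ dA) (hdB : 2 ≤ dB) :
    IsNowhereDense {ρ : {ρ : Matrix (Fin dA × Fin dB) (Fin dA × Fin dB) ℂ // IsDensityMatrix ρ} |
      (ρ : Matrix (Fin dA × Fin dB) (Fin dA × Fin dB) ℂ) *
          (ptraceB (ρ : Matrix (Fin dA × Fin dB) (Fin dA × Fin dB) ℂ)
            ⊗ₖ (1 : Matrix (Fin dB) (Fin dB) ℂ)) =
        (ptraceB (ρ : Matrix (Fin dA × Fin dB) (Fin dA × Fin dB) ℂ)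
            ⊗ₖ (1 : Matrix (Fin dB) (Fin dB) ℂ)) *
          (ρ : Matrix (Fin dA × Fin dB) (Fin dA × Fin dB) ℂ)} := by
  obtain ⟨σ, hσ, hσ_ne⟩ := exists_isDensityMatrix_commutatorPtraceB_ne_zero hdA hdB
  have h := commutatorPtraceB.isNowhereDense_setOf_apply_self_eq_zero
    convex_setOf_isDensityMatrix continuous_commutatorPtraceB_self hσ hσ_ne
  simp only [commutatorPtraceB_apply, sub_eq_zero] at h
  exact h
end

section
/- The set Ω₀ of zero-discord states is not convex: for dA = dB = 2 there exist ρ₁, ρ₂ ∈ Ω₀ such that the mixture ρ = (1/2)ρ₁ + (1/2)ρ₂ satisfies [ρ, (Tr_B ρ) ⊗ I₂] ≠ 0, and hence ρ ∉ Ω₀. Concretely, ρ₁ = (e₀e₀*) ⊗ (e₀e₀*) and ρ₂ = (v v*) ⊗ (e₁e₁*), where e₀, e₁ is the standard basis of ℂ² and v = (e₀ + e₁)/√2, provide such a pair. -/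
/-!
A zero-discord state `ρ = ∑ⱼ pⱼ Pⱼ ⊗ σⱼ`, with `Pⱼ` the projectors of an orthonormal basis, has
reduced state `Tr_B ρ = ∑ⱼ pⱼ Pⱼ`; since the `Pⱼ` pairwise commute, `ρ` commutes with
`Tr_B ρ ⊗ I`. Mixing two product states whose first factors `e₀e₀*` and `vv*` do not commute
breaks this, so the mixture is not zero-discord.
-/

open Matrix MeasureTheory
open scoped Kronecker ComplexOrder

/-- The standard basis vector `e₀` of `ℂ²`. -/
def e0 : Fin 2 → ℂ := fun i => if i = 0 then 1 else 0

/-- The standard basis vector `e₁` of `ℂ²`. -/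
def e1 : Fin 2 → ℂ := fun i => if i = 1 then 1 else 0

/-- The vector `v = (e₀ + e₁)/√2` of `ℂ²`. -/
noncomputable def vPlus : Fin 2 → ℂ := fun _ => (1 / Real.sqrt 2 : ℝ)

def IsOrthonormalFamily {ι n : Type*} [DecidableEq ι] [Fintype n] (v : ι → n → ℂ) : Prop :=
  ∀ j k, star (v j) ⬝ᵥ v k = if j = k then 1 else 0

theorem Commute.kronecker {l m R : Type*} [Fintype l] [Fintype m] [CommSemiring R]
    {A C : Matrix l l R} {B D : Matrix m m R} (hAC : Commute A C) (hBD : Commute B D) :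
    Commute (A ⊗ₖ B) (C ⊗ₖ D) := by
  simp only [Commute, SemiconjBy, ← mul_kronecker_mul, hAC.eq, hBD.eq]

theorem Matrix.sum_kronecker {ι l m n p R : Type*} [NonUnitalNonAssocSemiring R] (s : Finset ι)
    (A : ι → Matrix l m R) (B : Matrix n p R) :
    (∑ i ∈ s, A i) ⊗ₖ B = ∑ i ∈ s, A i ⊗ₖ B := by
  ext
  simp [Matrix.sum_apply, Finset.sum_mul]

theorem IsOrthonormalFamily.commute_vecMulVec {ι n : Type*} [DecidableEq ι] [Fintype n]
    {v : ι → n → ℂ} (hv : IsOrthonormalFamily v) (j k : ι) :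
    Commute (vecMulVec (v j) (star (v j))) (vecMulVec (v k) (star (v k))) := by
  obtain rfl | hjk := eq_or_ne j k
  · exact Commute.refl _
  · simp [Commute, SemiconjBy, vecMulVec_mul_vecMulVec, hv j k, hv k j, hjk, hjk.symm]

theorem isDensityMatrix_vecMulVec_star {n : Type*} [Fintype n] {v : n → ℂ}
    (hv : star v ⬝ᵥ v = 1) : IsDensityMatrix (vecMulVec v (star v)) :=
  ⟨posSemidef_vecMulVec_self_star v, by rw [trace_vecMulVec, dotProduct_comm, hv]⟩

section ptraceB

variable {dA dB : ℕ}

theorem ptraceB_kronecker (A : Matrix (Fin dA) (Fin dA) ℂ) (B : Matrix (Fin dB) (Fin dB) ℂ) :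
    ptraceB (A ⊗ₖ B) = B.trace • A := by
  ext
  simp [ptraceB, trace, Finset.mul_sum, mul_comm]

theorem ptraceB_smul (c : ℂ) (ρ : Matrix (Fin dA × Fin dB) (Fin dA × Fin dB) ℂ) :
    ptraceB (c • ρ) = c • ptraceB ρ := by
  ext
  simp [ptraceB, Finset.mul_sum]

theorem ptraceB_sum {ι : Type*} (s : Finset ι)
    (ρ : ι → Matrix (Fin dA × Fin dB) (Fin dA × Fin dB) ℂ) :
    ptraceB (∑ i ∈ s, ρ i) = ∑ i ∈ s, ptraceB (ρ i) := by
  ext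
  simp [ptraceB, Matrix.sum_apply, Finset.sum_comm (s := s)]

end ptraceB

theorem isZeroDiscord_vecMulVec_kronecker {dA dB : ℕ} {v : Fin dA → Fin dA → ℂ}
    (hv : IsOrthonormalFamily v) (j : Fin dA) {σ : Matrix (Fin dB) (Fin dB) ℂ}
    (hσ : IsDensityMatrix σ) :
    IsZeroDiscord (vecMulVec (v j) (star (v j)) ⊗ₖ σ) := by
  have hp : 0 ≤ (Pi.single j 1 : Fin dA → ℝ) := Pi.single_nonneg.2 zero_le_one
  refine ⟨v, Pi.single j 1, fun _ => σ, hv, hp, by simp, fun _ => hσ, ?_⟩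
  rw [Finset.sum_eq_single j (fun k _ hk => by simp [hk]) (by simp)]
  simp

theorem IsZeroDiscord.commute_ptraceB_kronecker_one {dA dB : ℕ}
    {ρ : Matrix (Fin dA × Fin dB) (Fin dA × Fin dB) ℂ} (h : IsZeroDiscord ρ) :
    Commute ρ (ptraceB ρ ⊗ₖ (1 : Matrix (Fin dB) (Fin dB) ℂ)) := by
  obtain ⟨v, p, σ, hv, -, -, hσ, rfl⟩ := h
  simp only [ptraceB_sum, ptraceB_smul, ptraceB_kronecker, (hσ _).2, one_smul, sum_kronecker,
    smul_kronecker]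
  have hP : IsOrthonormalFamily v := hv
  refine Commute.sum_left _ _ _ fun j _ => Commute.sum_right _ _ _ fun k _ => ?_
  exact (((hP.commute_vecMulVec j k).kronecker (Commute.one_right _)).smul_left _).smul_right _

theorem inv_sqrt_two_mul_self : ((√2 : ℝ) : ℂ)⁻¹ * ((√2 : ℝ) : ℂ)⁻¹ = 1 / 2 := by
  rw [← mul_inv, ← Complex.ofReal_mul, Real.mul_self_sqrt zero_le_two]
  norm_num

noncomputable def vMinus : Fin 2 → ℂ := ![(1 / √2 : ℝ), -(1 / √2 : ℝ)]

theorem isOrthonormalFamily_e0_e1 : IsOrthonormalFamily ![e0, e1] := by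
  intro j k
  fin_cases j <;> fin_cases k <;> simp [dotProduct, e0, e1]

theorem isOrthonormalFamily_vPlus_vMinus : IsOrthonormalFamily ![vPlus, vMinus] := by
  intro j k
  fin_cases j <;> fin_cases k <;>
    norm_num [dotProduct, Fin.sum_univ_two, vPlus, vMinus, inv_sqrt_two_mul_self]

local notation "ρ₁" => vecMulVec e0 (star e0) ⊗ₖ vecMulVec e0 (star e0)
local notation "ρ₂" => vecMulVec vPlus (star vPlus) ⊗ₖ vecMulVec e1 (star e1)

theorem not_commute_mixture :
    ¬ Commute ((1 / 2 : ℂ) • ρ₁ + (1 / 2 : ℂ) • ρ₂)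
      (ptraceB ((1 / 2 : ℂ) • ρ₁ + (1 / 2 : ℂ) • ρ₂) ⊗ₖ (1 : Matrix (Fin 2) (Fin 2) ℂ)) := by
  intro h
  -- the `((0, 0), (1, 0))` entries of the two products are `1 / 8` and `0`
  have h_entry := congrFun₂ h.eq (0, 0) (1, 0)
  norm_num [mul_apply, Fintype.sum_prod_type, ptraceB, vecMulVec_apply, e0, e1, vPlus, one_apply,
    inv_sqrt_two_mul_self] at h_entry

/-- `Ω₀` is not convex: the zero-discord states
`ρ₁ = (e₀e₀*) ⊗ (e₀e₀*)` and `ρ₂ = (vv*) ⊗ (e₁e₁*)` have a uniform mixture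
`ρ = ½ρ₁ + ½ρ₂` whose commutator with its reduced state is nonzero, so
`ρ ∉ Ω₀`. -/
theorem Omega0_not_convex :
    IsZeroDiscord (Matrix.vecMulVec e0 (star e0) ⊗ₖ Matrix.vecMulVec e0 (star e0)) ∧
    IsZeroDiscord (Matrix.vecMulVec vPlus (star vPlus) ⊗ₖ Matrix.vecMulVec e1 (star e1)) ∧
    ((1 / 2 : ℂ) • (Matrix.vecMulVec e0 (star e0) ⊗ₖ Matrix.vecMulVec e0 (star e0)) +
        (1 / 2 : ℂ) • (Matrix.vecMulVec vPlus (star vPlus) ⊗ₖ Matrix.vecMulVec e1 (star e1))) *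
      (ptraceB ((1 / 2 : ℂ) • (Matrix.vecMulVec e0 (star e0) ⊗ₖ Matrix.vecMulVec e0 (star e0)) +
          (1 / 2 : ℂ) • (Matrix.vecMulVec vPlus (star vPlus) ⊗ₖ Matrix.vecMulVec e1 (star e1)))
        ⊗ₖ (1 : Matrix (Fin 2) (Fin 2) ℂ)) ≠
      (ptraceB ((1 / 2 : ℂ) • (Matrix.vecMulVec e0 (star e0) ⊗ₖ Matrix.vecMulVec e0 (star e0)) +
          (1 / 2 : ℂ) • (Matrix.vecMulVec vPlus (star vPlus) ⊗ₖ Matrix.vecMulVec e1 (star e1)))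
        ⊗ₖ (1 : Matrix (Fin 2) (Fin 2) ℂ)) *
      ((1 / 2 : ℂ) • (Matrix.vecMulVec e0 (star e0) ⊗ₖ Matrix.vecMulVec e0 (star e0)) +
        (1 / 2 : ℂ) • (Matrix.vecMulVec vPlus (star vPlus) ⊗ₖ Matrix.vecMulVec e1 (star e1))) ∧
    ¬ IsZeroDiscord
      ((1 / 2 : ℂ) • (Matrix.vecMulVec e0 (star e0) ⊗ₖ Matrix.vecMulVec e0 (star e0)) +
        (1 / 2 : ℂ) • (Matrix.vecMulVec vPlus (star vPlus) ⊗ₖ Matrix.vecMulVec e1 (star e1))) := by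
  have hmix := not_commute_mixture
  exact ⟨isZeroDiscord_vecMulVec_kronecker isOrthonormalFamily_e0_e1 0
      (isDensityMatrix_vecMulVec_star (isOrthonormalFamily_e0_e1 0 0)),
    isZeroDiscord_vecMulVec_kronecker isOrthonormalFamily_vPlus_vMinus 0
      (isDensityMatrix_vecMulVec_star (isOrthonormalFamily_e0_e1 1 1)),
    hmix, fun h => hmix h.commute_ptraceB_kronecker_one⟩
end
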